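/- Let f : A → B be a faithfully flat homomorphism of commutative rings. Then the augmented Amitsur complex 0 → A → B → B ⊗_A B → B ⊗_A B ⊗_A B → ⋯ is exact, where the differentials are alternating sums of the maps inserting a 1 into each tensor slot. -/

import Mathlib

/-!
After the base change `B ⊗[A] -`, the augmented Amitsur complex becomes contractible: in degree
`n` the map `b ⊗ (x ⊗ c) ↦ (-1)ⁿ (b * c) ⊗ x`, which multiplies the last tensor factor into the
new outer one, is a contracting homotopy. Since `B` is faithfully flat over `A`, exactness of the
base-changed complex descends to the complex itself.
-/

open TensorProduct

universe u

variable (A B : Type u) [CommRing A] [CommRing B] [Algebra A B]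

/-- `AmitsurPow A B n` is the `n`-fold tensor power `B ⊗[A] ⋯ ⊗[A] B`, with
`AmitsurPow A B 0 = A`. -/
noncomputable def AmitsurPow (n : ℕ) : ModuleCat.{u} A :=
  Nat.rec (ModuleCat.of A A) (fun _ Tn => ModuleCat.of A (Tn ⊗[A] B)) n

/-- The `i`-th coface (unit-insertion) map `B^{⊗ n} → B^{⊗ (n+1)}`, inserting a `1`
into the `i`-th tensor slot. -/
noncomputable def amitsurIns :
    ∀ n : ℕ, Fin (n + 1) → ((AmitsurPow A B n) →ₗ[A] (AmitsurPow A B (n + 1)))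
  | 0, _ => (TensorProduct.mk A (AmitsurPow A B 0) B).flip 1
  | n + 1, i =>
    Fin.lastCases
      ((TensorProduct.mk A (AmitsurPow A B (n + 1)) B).flip 1)
      (fun j => TensorProduct.map (amitsurIns n j) (LinearMap.id (R := A) (M := B)))
      i

/-- The Amitsur differential `B^{⊗ n} → B^{⊗ (n+1)}`, the alternating sum of the
unit-insertion maps.  In degree `0` it is the structure map `A → B`. -/
noncomputable def amitsurD (n : ℕ) : (AmitsurPow A B n) →ₗ[A] (AmitsurPow A B (n + 1)) :=
  ∑ i : Fin (n + 1), ((-1 : ℤ) ^ (i : ℕ)) • amitsurIns A B n i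

lemma LinearMap.lTensor_zsmul {R M N P : Type*} [CommRing R] [AddCommGroup M] [Module R M]
    [AddCommGroup N] [Module R N] [AddCommGroup P] [Module R P] (z : ℤ) (f : N →ₗ[R] P) :
    (z • f).lTensor M = z • f.lTensor M :=
  map_zsmul (LinearMap.lTensorHom M) z f

lemma LinearMap.exact_of_comp_eq_zero_of_comp_add_comp_eq_id {R M N P : Type*} [Ring R]
    [AddCommGroup M] [AddCommGroup N] [AddCommGroup P] [Module R M] [Module R N] [Module R P]
    {f : M →ₗ[R] N} {g : N →ₗ[R] P} (s : N →ₗ[R] M) (t : P →ₗ[R] N) (hfg : g ∘ₗ f = 0)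
    (hst : f ∘ₗ s + t ∘ₗ g = LinearMap.id) : Function.Exact f g :=
  exact_of_comp_of_mem_range hfg fun y hy ↦ ⟨s y, by simpa [hy] using congr($hst y)⟩

section MulLast

variable (R S : Type*) [CommSemiring R] [Semiring S] [Algebra R S]
variable {M N : Type*} [AddCommMonoid M] [Module R M] [AddCommMonoid N] [Module R N]

variable (M) in
noncomputable def mulLast : S ⊗[R] (M ⊗[R] S) →ₗ[R] S ⊗[R] M :=
  LinearMap.rTensor M (LinearMap.mul' R S) ∘ₗ (TensorProduct.assoc R S S M).symm.toLinearMap ∘ₗ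
    LinearMap.lTensor S (TensorProduct.comm R M S).toLinearMap

@[simp]
lemma mulLast_tmul (b c : S) (m : M) : mulLast R S M (b ⊗ₜ[R] (m ⊗ₜ[R] c)) = (b * c) ⊗ₜ[R] m :=
  rfl

lemma mulLast_comp_lTensor_rTensor (f : M →ₗ[R] N) :
    mulLast R S N ∘ₗ (f.rTensor S).lTensor S = f.lTensor S ∘ₗ mulLast R S M :=
  TensorProduct.ext_threefold' fun b m c ↦ by simp

lemma mulLast_comp_lTensor_flip_mk_one :
    mulLast R S M ∘ₗ ((TensorProduct.mk R M S).flip 1).lTensor S = LinearMap.id :=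
  TensorProduct.ext' fun b m ↦ by simp

end MulLast

/- `rTensor B`, `x ↦ x ⊗ 1` and `mulLast` restated between the `AmitsurPow` types themselves:
`rw` does not see through the unfolding `AmitsurPow A B (n + 1) = AmitsurPow A B n ⊗[A] B`. -/
noncomputable def amitsurRTensor {n m : ℕ} :
    (AmitsurPow A B n →ₗ[A] AmitsurPow A B m) →ₗ[A]
      (AmitsurPow A B (n + 1) →ₗ[A] AmitsurPow A B (m + 1)) :=
  LinearMap.rTensorHom B

noncomputable def amitsurInsLast (n : ℕ) : AmitsurPow A B n →ₗ[A] AmitsurPow A B (n + 1) :=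
  (TensorProduct.mk A (AmitsurPow A B n) B).flip 1

lemma amitsurRTensor_comp {n m k : ℕ} (g : AmitsurPow A B n →ₗ[A] AmitsurPow A B m)
    (h : AmitsurPow A B m →ₗ[A] AmitsurPow A B k) :
    amitsurRTensor A B h ∘ₗ amitsurRTensor A B g = amitsurRTensor A B (h ∘ₗ g) :=
  (LinearMap.rTensor_comp B h g).symm

lemma amitsurRTensor_comp_amitsurInsLast {n m : ℕ} (g : AmitsurPow A B n →ₗ[A] AmitsurPow A B m) :
    amitsurRTensor A B g ∘ₗ amitsurInsLast A B n = amitsurInsLast A B m ∘ₗ g :=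
  rfl

lemma amitsurIns_succ_castSucc (n : ℕ) (i : Fin (n + 1)) :
    amitsurIns A B (n + 1) i.castSucc = amitsurRTensor A B (amitsurIns A B n i) :=
  Fin.lastCases_castSucc i

lemma amitsurIns_last (n : ℕ) : amitsurIns A B n (Fin.last n) = amitsurInsLast A B n := by
  cases n with
  | zero => rfl
  | succ n => exact Fin.lastCases_last

lemma amitsurD_zero : amitsurD A B 0 = amitsurInsLast A B 0 := by
  simp [amitsurD, ← amitsurIns_last]

lemma amitsurD_succ (n : ℕ) :
    amitsurD A B (n + 1) = amitsurRTensor A B (amitsurD A B n)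
      + ((-1 : ℤ) ^ (n + 1)) • amitsurInsLast A B (n + 1) := by
  simp only [amitsurD, map_sum, map_zsmul]
  rw [Fin.sum_univ_castSucc (n := n + 1)]
  simp only [amitsurIns_succ_castSucc, amitsurIns_last, Fin.val_castSucc, Fin.val_last]

lemma amitsurD_comp_amitsurD (n : ℕ) : amitsurD A B (n + 1) ∘ₗ amitsurD A B n = 0 := by
  induction n with
  | zero =>
    rw [amitsurD_succ, amitsurD_zero, LinearMap.add_comp, LinearMap.smul_comp,
      amitsurRTensor_comp_amitsurInsLast]
    simp
  | succ n ih =>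
    rw [amitsurD_succ A B (n + 1), LinearMap.add_comp, LinearMap.smul_comp]
    nth_rw 2 [amitsurD_succ A B n]
    rw [LinearMap.comp_add, LinearMap.comp_smul, amitsurRTensor_comp, ih, map_zero,
      amitsurRTensor_comp_amitsurInsLast, pow_succ _ (n + 1), mul_neg_one, neg_smul]
    simp

noncomputable def amitsurContraction (n : ℕ) :
    B ⊗[A] AmitsurPow A B (n + 1) →ₗ[A] B ⊗[A] AmitsurPow A B n :=
  mulLast A B (AmitsurPow A B n)

lemma amitsurContraction_comp_lTensor_amitsurRTensor {n m : ℕ}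
    (g : AmitsurPow A B n →ₗ[A] AmitsurPow A B m) :
    amitsurContraction A B m ∘ₗ (amitsurRTensor A B g).lTensor B
      = g.lTensor B ∘ₗ amitsurContraction A B n :=
  mulLast_comp_lTensor_rTensor A B g

lemma amitsurContraction_comp_lTensor_amitsurInsLast (n : ℕ) :
    amitsurContraction A B n ∘ₗ (amitsurInsLast A B n).lTensor B = LinearMap.id :=
  mulLast_comp_lTensor_flip_mk_one A B

lemma amitsurContraction_zero_comp_lTensor_amitsurD_zero :
    amitsurContraction A B 0 ∘ₗ (amitsurD A B 0).lTensor B = LinearMap.id := by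
  rw [amitsurD_zero]
  exact amitsurContraction_comp_lTensor_amitsurInsLast A B 0

lemma lTensor_amitsurD_comp_amitsurContraction_add (n : ℕ) :
    (amitsurD A B n).lTensor B ∘ₗ ((-1 : ℤ) ^ n • amitsurContraction A B n)
      + ((-1 : ℤ) ^ (n + 1) • amitsurContraction A B (n + 1)) ∘ₗ (amitsurD A B (n + 1)).lTensor B
      = LinearMap.id := by
  rw [amitsurD_succ, LinearMap.lTensor_add, LinearMap.lTensor_zsmul]
  simp only [LinearMap.comp_add, LinearMap.comp_smul, LinearMap.smul_comp,
    amitsurContraction_comp_lTensor_amitsurRTensor, amitsurContraction_comp_lTensor_amitsurInsLast]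
  rw [smul_smul, ← pow_add, Even.neg_one_pow ⟨_, rfl⟩, one_smul, ← add_assoc, ← add_smul,
    pow_succ, mul_neg_one, add_neg_cancel, zero_smul, zero_add]

/-- If `A → B` is faithfully flat, then the augmented Amitsur complex
`0 → A → B → B ⊗[A] B → B ⊗[A] B ⊗[A] B → ⋯`, with differentials the alternating
sums of the unit-insertion maps, is exact. -/
theorem amitsur_complex_exact_of_faithfullyFlat
    [Module.FaithfullyFlat A B] :
    Function.Injective (amitsurD A B 0) ∧
    ∀ n : ℕ, LinearMap.ker (amitsurD A B (n + 1)) = LinearMap.range (amitsurD A B n) := by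
  refine ⟨?_, fun n ↦ ?_⟩
  · rw [← Module.FaithfullyFlat.lTensor_injective_iff_injective A B]
    exact Function.LeftInverse.injective (g := amitsurContraction A B 0)
      fun x ↦ congr($(amitsurContraction_zero_comp_lTensor_amitsurD_zero A B) x)
  · rw [← LinearMap.exact_iff, ← Module.FaithfullyFlat.lTensor_exact_iff_exact A B]
    refine LinearMap.exact_of_comp_eq_zero_of_comp_add_comp_eq_id _ _ ?_
      (lTensor_amitsurD_comp_amitsurContraction_add A B n)
    rw [← LinearMap.lTensor_comp, amitsurD_comp_amitsurD, LinearMap.lTensor_zero]
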